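/- In the mobility-driven epidemic model, every entry of the state vector is a posynomial in the controls: for each t ≥ 0, each of the four quantities E(t), I(t), A(t), H(t) is given by a posynomial function of the K·t variables consisting of the entries of u(0),…,u(t−1), valid for all positive control sequences. -/

import Mathlib

/-!
Posynomials are closed under sums, products and substitutions `x ↦ x ∘ e` of variables.
All coefficients of the epidemic recursion (`ρ`, `1 - ρ`, `S₀`, `γ_A`) are positive and
`β(t)` is a posynomial in `u(t)`, so by induction on `t` each state at time `t` is a
posynomial in the controls `u(0), …, u(t-1)`.
-/

/-- A posynomial on the positive orthant: a finite sum of one or more monomials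
`c_i * ∏_j x_j ^ a_{i,j}` with positive coefficients and real exponents. -/
def IsPosynomial {ι : Type*} [Fintype ι] (f : (ι → ℝ) → ℝ) : Prop :=
  ∃ k : ℕ, 0 < k ∧ ∃ (c : Fin k → ℝ) (a : Fin k → ι → ℝ),
    (∀ i, 0 < c i) ∧
    ∀ x : ι → ℝ, (∀ j, 0 < x j) → f x = ∑ i, c i * ∏ j, x j ^ a i j

/-- The state `(E(t), I(t), A(t), H(t))` of the mobility-driven epidemic model, where
the infection rate at time `t` is `β(t) = Σ_k θ_k (u_k(t))^(α_k) + b`. -/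
noncomputable def epiState (K : ℕ) (θ a : Fin K → ℝ)
    (b S0 γA ρEI ρEA ρIR ρIH ρAR ρHR ρHD E0 I0 A0 H0 : ℝ)
    (u : ℕ → Fin K → ℝ) : ℕ → ℝ × ℝ × ℝ × ℝ
  | 0 => (E0, I0, A0, H0)
  | t + 1 =>
    let s := epiState K θ a b S0 γA ρEI ρEA ρIR ρIH ρAR ρHR ρHD E0 I0 A0 H0 u t
    let β : ℝ := (∑ k, θ k * u t k ^ a k) + b
    ((1 - ρEI - ρEA) * s.1 + S0 * β * (γA * s.2.2.1 + s.2.1),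
     (1 - ρIR - ρIH) * s.2.1 + ρEI * s.1,
     (1 - ρAR) * s.2.2.1 + ρEA * s.1,
     (1 - ρHR - ρHD) * s.2.2.2 + ρIH * s.2.1)

/-- The cumulative deaths `D(t)` of the mobility-driven epidemic model:
`D(t+1) = D(t) + α_D ρ_HR H(t)`. -/
noncomputable def epiD (K : ℕ) (θ a : Fin K → ℝ)
    (b S0 γA ρEI ρEA ρIR ρIH ρAR ρHR ρHD E0 I0 A0 H0 αD D0 : ℝ)
    (u : ℕ → Fin K → ℝ) : ℕ → ℝ
  | 0 => D0
  | t + 1 => epiD K θ a b S0 γA ρEI ρEA ρIR ρIH ρAR ρHR ρHD E0 I0 A0 H0 αD D0 u t +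
      αD * ρHR * (epiState K θ a b S0 γA ρEI ρEA ρIR ρIH ρAR ρHR ρHD E0 I0 A0 H0 u t).2.2.2

namespace IsPosynomial

variable {ι κ : Type*} [Fintype ι] [Fintype κ]

theorem of_fintype {σ : Type*} [Fintype σ] [Nonempty σ] {f : (ι → ℝ) → ℝ}
    (c : σ → ℝ) (a : σ → ι → ℝ) (hc : ∀ s, 0 < c s)
    (hf : ∀ x : ι → ℝ, (∀ j, 0 < x j) → f x = ∑ s, c s * ∏ j, x j ^ a s j) :
    IsPosynomial f := by
  let e := Fintype.equivFin σ
  refine ⟨Fintype.card σ, Fintype.card_pos, c ∘ e.symm, a ∘ e.symm,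
    fun i => hc _, fun x hx => ?_⟩
  rw [hf x hx, ← e.symm.sum_comp]
  rfl

theorem const {c : ℝ} (hc : 0 < c) : IsPosynomial (fun _ : ι → ℝ => c) :=
  of_fintype (σ := Unit) (fun _ => c) (fun _ _ => 0) (fun _ => hc) fun x _ => by simp

theorem rpow_apply [DecidableEq ι] (j : ι) (r : ℝ) :
    IsPosynomial (fun x : ι → ℝ => x j ^ r) :=
  of_fintype (σ := Unit) (fun _ => 1) (fun _ => Pi.single j r) (fun _ => one_pos)
    fun x _ => by
      rw [Fintype.sum_unique, one_mul, Finset.prod_eq_single j (fun i _ hij => by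
        rw [Pi.single_eq_of_ne hij, Real.rpow_zero]) (by simp), Pi.single_eq_same]

theorem add {f g : (ι → ℝ) → ℝ} (hf : IsPosynomial f) (hg : IsPosynomial g) :
    IsPosynomial (fun x => f x + g x) := by
  obtain ⟨k, hk, c, a, hc, hf⟩ := hf
  obtain ⟨l, hl, d, b, hd, hg⟩ := hg
  have : Nonempty (Fin k ⊕ Fin l) := ⟨.inl ⟨0, hk⟩⟩
  refine of_fintype (Sum.elim c d) (Sum.elim a b) (Sum.rec hc hd) fun x hx => ?_
  rw [hf x hx, hg x hx, Fintype.sum_sum_type]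
  rfl

theorem mul {f g : (ι → ℝ) → ℝ} (hf : IsPosynomial f) (hg : IsPosynomial g) :
    IsPosynomial (fun x => f x * g x) := by
  obtain ⟨k, hk, c, a, hc, hf⟩ := hf
  obtain ⟨l, hl, d, b, hd, hg⟩ := hg
  have : Nonempty (Fin k × Fin l) := ⟨(⟨0, hk⟩, ⟨0, hl⟩)⟩
  refine of_fintype (fun s : Fin k × Fin l => c s.1 * d s.2) (fun s j => a s.1 j + b s.2 j)
    (fun s => mul_pos (hc s.1) (hd s.2)) fun x hx => ?_
  simp only [hf x hx, hg x hx, Finset.sum_mul_sum, Fintype.sum_prod_type,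
    Real.rpow_add (hx _), Finset.prod_mul_distrib]
  exact Finset.sum_congr rfl fun _ _ => Finset.sum_congr rfl fun _ _ => by ring

/-- Substitution `x ↦ x ∘ e` adds up the exponents of the variables that `e` identifies. -/
theorem comp [DecidableEq κ] {f : (ι → ℝ) → ℝ} (hf : IsPosynomial f) (e : ι → κ) :
    IsPosynomial (fun x : κ → ℝ => f (x ∘ e)) := by
  obtain ⟨k, hk, c, a, hc, hf⟩ := hf
  refine ⟨k, hk, c, fun s j' => ∑ j with e j = j', a s j, hc, fun x hx => ?_⟩
  beta_reduce
  rw [hf (x ∘ e) fun j => hx (e j)]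
  refine Finset.sum_congr rfl fun s _ => congrArg _ ?_
  simp only [Real.rpow_sum_of_pos (hx _)]
  rw [← Finset.prod_fiberwise Finset.univ e]
  refine Finset.prod_congr rfl fun j' _ => Finset.prod_congr rfl fun i hi => ?_
  rw [Function.comp_apply, (Finset.mem_filter.1 hi).2]

end IsPosynomial

def IsPosynomialInControls {κ : Type*} [Fintype κ] (t : ℕ) (F : (ℕ → κ → ℝ) → ℝ) :
    Prop :=
  ∃ p : (Fin t × κ → ℝ) → ℝ, IsPosynomial p ∧
    ∀ u : ℕ → κ → ℝ, (∀ s k, 0 < u s k) → F u = p (fun q => u (q.1 : ℕ) q.2)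

namespace IsPosynomialInControls

variable {κ : Type*} [Fintype κ] {t : ℕ} {F G : (ℕ → κ → ℝ) → ℝ}

theorem const {c : ℝ} (hc : 0 < c) : IsPosynomialInControls (κ := κ) t (fun _ => c) :=
  ⟨_, .const hc, fun _ _ => rfl⟩

theorem rpow_control [DecidableEq κ] {s : ℕ} (hs : s < t) (k : κ) (r : ℝ) :
    IsPosynomialInControls t (fun u => u s k ^ r) :=
  ⟨_, .rpow_apply (⟨s, hs⟩, k) r, fun _ _ => rfl⟩

theorem add (hF : IsPosynomialInControls t F) (hG : IsPosynomialInControls t G) :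
    IsPosynomialInControls t (fun u => F u + G u) := by
  obtain ⟨p, hp, hpF⟩ := hF
  obtain ⟨q, hq, hqG⟩ := hG
  exact ⟨_, hp.add hq, fun u hu => congrArg₂ (· + ·) (hpF u hu) (hqG u hu)⟩

theorem mul (hF : IsPosynomialInControls t F) (hG : IsPosynomialInControls t G) :
    IsPosynomialInControls t (fun u => F u * G u) := by
  obtain ⟨p, hp, hpF⟩ := hF
  obtain ⟨q, hq, hqG⟩ := hG
  exact ⟨_, hp.mul hq, fun u hu => congrArg₂ (· * ·) (hpF u hu) (hqG u hu)⟩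

theorem sum_add {ι : Type*} {s : Finset ι} {F : ι → (ℕ → κ → ℝ) → ℝ}
    (hF : ∀ i ∈ s, IsPosynomialInControls t (F i)) (hG : IsPosynomialInControls t G) :
    IsPosynomialInControls t (fun u => ∑ i ∈ s, F i u + G u) := by
  classical
  induction s using Finset.induction_on with
  | empty => simpa only [Finset.sum_empty, zero_add] using hG
  | insert i s hi ih =>
    simp only [Finset.sum_insert hi, add_assoc]
    exact (hF i (s.mem_insert_self i)).add
      (ih fun j hj => hF j (Finset.mem_insert_of_mem hj))

theorem mono [DecidableEq κ] {t' : ℕ} (hF : IsPosynomialInControls t F) (h : t ≤ t') :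
    IsPosynomialInControls t' F := by
  obtain ⟨p, hp, hpF⟩ := hF
  exact ⟨_, hp.comp (Prod.map (Fin.castLE h) id), hpF⟩

end IsPosynomialInControls

theorem states_isPosynomial_general (K : ℕ) (θ a : Fin K → ℝ)
    (b S0 γA ρEI ρEA ρIR ρIH ρAR ρHR ρHD E0 I0 A0 H0 : ℝ)
    (hθ : ∀ k, 0 < θ k) (hb : 0 < b) (hS0 : 0 < S0) (hγA : 0 < γA)
    (hρEI : 0 < ρEI) (hρEA : 0 < ρEA) (hρIH : 0 < ρIH)
    (hEsum : ρEI + ρEA < 1) (hIsum : ρIR + ρIH < 1) (hAsum : ρAR < 1)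
    (hHsum : ρHR + ρHD < 1)
    (hE0 : 0 < E0) (hI0 : 0 < I0) (hA0 : 0 < A0) (hH0 : 0 < H0)
    (t : ℕ) :
    ∃ pE pI pA pH : (Fin t × Fin K → ℝ) → ℝ,
      IsPosynomial pE ∧ IsPosynomial pI ∧ IsPosynomial pA ∧ IsPosynomial pH ∧
      ∀ u : ℕ → Fin K → ℝ, (∀ s k, 0 < u s k) →
        (epiState K θ a b S0 γA ρEI ρEA ρIR ρIH ρAR ρHR ρHD E0 I0 A0 H0 u t).1 =
            pE (fun q => u (q.1 : ℕ) q.2) ∧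
        (epiState K θ a b S0 γA ρEI ρEA ρIR ρIH ρAR ρHR ρHD E0 I0 A0 H0 u t).2.1 =
            pI (fun q => u (q.1 : ℕ) q.2) ∧
        (epiState K θ a b S0 γA ρEI ρEA ρIR ρIH ρAR ρHR ρHD E0 I0 A0 H0 u t).2.2.1 =
            pA (fun q => u (q.1 : ℕ) q.2) ∧
        (epiState K θ a b S0 γA ρEI ρEA ρIR ρIH ρAR ρHR ρHD E0 I0 A0 H0 u t).2.2.2 =
            pH (fun q => u (q.1 : ℕ) q.2) := by
  have hcE : 0 < 1 - ρEI - ρEA := by linarith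
  have hcI : 0 < 1 - ρIR - ρIH := by linarith
  have hcA : 0 < 1 - ρAR := by linarith
  have hcH : 0 < 1 - ρHR - ρHD := by linarith
  set S := epiState K θ a b S0 γA ρEI ρEA ρIR ρIH ρAR ρHR ρHD E0 I0 A0 H0
  have key : ∀ t,
      IsPosynomialInControls t (fun u => (S u t).1) ∧
      IsPosynomialInControls t (fun u => (S u t).2.1) ∧
      IsPosynomialInControls t (fun u => (S u t).2.2.1) ∧
      IsPosynomialInControls t (fun u => (S u t).2.2.2) := by
    intro t
    induction t with
    | zero => exact ⟨.const hE0, .const hI0, .const hA0, .const hH0⟩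
    | succ t ih =>
      obtain ⟨hE, hI, hA, hH⟩ := ih
      open IsPosynomialInControls in
      have hβ : IsPosynomialInControls (t + 1) fun u => (∑ k, θ k * u t k ^ a k) + b :=
        sum_add (fun k _ => (const (hθ k)).mul (rpow_control t.lt_succ_self k (a k))) (const hb)
      replace hE := hE.mono t.le_succ
      replace hI := hI.mono t.le_succ
      replace hA := hA.mono t.le_succ
      replace hH := hH.mono t.le_succ
      open IsPosynomialInControls in
      exact ⟨((const hcE).mul hE).add (((const hS0).mul hβ).mul (((const hγA).mul hA).add hI)),
        ((const hcI).mul hI).add ((const hρEI).mul hE),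
        ((const hcA).mul hA).add ((const hρEA).mul hE),
        ((const hcH).mul hH).add ((const hρIH).mul hI)⟩
  obtain ⟨⟨pE, hpE, hE⟩, ⟨pI, hpI, hI⟩, ⟨pA, hpA, hA⟩, ⟨pH, hpH, hH⟩⟩ := key t
  exact ⟨pE, pI, pA, pH, hpE, hpI, hpA, hpH,
    fun u hu => ⟨hE u hu, hI u hu, hA u hu, hH u hu⟩⟩

/-- In the mobility-driven epidemic model, every entry of the state vector is a
posynomial in the controls: each of `E(t), I(t), A(t), H(t)` is a posynomial function
of the `K·t` control variables (the entries of `u(0), …, u(t-1)`). -/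
theorem states_isPosynomial (K : ℕ) (θ a : Fin K → ℝ)
    (b S0 γA ρEI ρEA ρIR ρIH ρAR ρHR ρHD E0 I0 A0 H0 : ℝ)
    (hθ : ∀ k, 0 < θ k) (hb : 0 < b) (hS0 : 0 < S0) (hγA : 0 < γA)
    (hρEI : 0 < ρEI) (hρEA : 0 < ρEA) (hρIR : 0 < ρIR) (hρIH : 0 < ρIH)
    (hρAR : 0 < ρAR) (hρHR : 0 < ρHR) (hρHD : 0 < ρHD)
    (hEsum : ρEI + ρEA < 1) (hIsum : ρIR + ρIH < 1) (hAsum : ρAR < 1)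
    (hHsum : ρHR + ρHD < 1)
    (hE0 : 0 < E0) (hI0 : 0 < I0) (hA0 : 0 < A0) (hH0 : 0 < H0)
    (t : ℕ) :
    ∃ pE pI pA pH : (Fin t × Fin K → ℝ) → ℝ,
      IsPosynomial pE ∧ IsPosynomial pI ∧ IsPosynomial pA ∧ IsPosynomial pH ∧
      ∀ u : ℕ → Fin K → ℝ, (∀ s k, 0 < u s k) →
        (epiState K θ a b S0 γA ρEI ρEA ρIR ρIH ρAR ρHR ρHD E0 I0 A0 H0 u t).1 =
            pE (fun q => u (q.1 : ℕ) q.2) ∧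
        (epiState K θ a b S0 γA ρEI ρEA ρIR ρIH ρAR ρHR ρHD E0 I0 A0 H0 u t).2.1 =
            pI (fun q => u (q.1 : ℕ) q.2) ∧
        (epiState K θ a b S0 γA ρEI ρEA ρIR ρIH ρAR ρHR ρHD E0 I0 A0 H0 u t).2.2.1 =
            pA (fun q => u (q.1 : ℕ) q.2) ∧
        (epiState K θ a b S0 γA ρEI ρEA ρIR ρIH ρAR ρHR ρHD E0 I0 A0 H0 u t).2.2.2 =
            pH (fun q => u (q.1 : ℕ) q.2) :=
  states_isPosynomial_general K θ a b S0 γA ρEI ρEA ρIR ρIH ρAR ρHR ρHD E0 I0 A0 H0 hθ hb hS0 hγA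
    hρEI hρEA hρIH hEsum hIsum hAsum hHsum hE0 hI0 hA0 hH0 t
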